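/- Fix ξ₁ ∈ F₄ \ {0} and let S_{ξ₁} = { [0,ζ₁,...,ζ_m] : ζᵢ ∈ {0,ξ₁} } ⊆ F₂ ⊕ F₄^m. Let S_A, S_B be its even- and odd-weight subsets, fix distinct nonzero ξ₂ ≠ ξ₁, let ν = [1{m even}, ξ₂,...,ξ₂], S_C = ν + S_A and S_D = ν + S_B. Then S_A, S_B, S_C, S_D are pairwise disjoint, each of size 2^{m-1}, and for any i ≠ j in {A,B,C,D} and u ∈ S_i, v ∈ S_j, the Hamming weight of u+v is odd. -/

import Mathlib

def add4 : Fin 4 → Fin 4 → Fin 4 :=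
  ![![0, 1, 2, 3], ![1, 0, 3, 2], ![2, 3, 0, 1], ![3, 2, 1, 0]]

def addV {m : ℕ} (p q : ZMod 2 × (Fin m → Fin 4)) : ZMod 2 × (Fin m → Fin 4) :=
  (p.1 + q.1, fun k => add4 (p.2 k) (q.2 k))

def wtV {m : ℕ} (p : ZMod 2 × (Fin m → Fin 4)) : ℕ :=
  (if p.1 ≠ 0 then 1 else 0) + (Finset.univ.filter fun k => p.2 k ≠ 0).card

/-- S_{ξ₁} = { [0,ζ₁,…,ζ_m] : ζᵢ ∈ {0,ξ₁} }. -/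
def Sxi (m : ℕ) (ξ₁ : Fin 4) : Finset (ZMod 2 × (Fin m → Fin 4)) :=
  Finset.univ.filter fun u => u.1 = 0 ∧ ∀ j, u.2 j = 0 ∨ u.2 j = ξ₁

/-! On `Sxi m ξ₁` every coordinate lies in the subgroup `{0, ξ₁}` of `(𝔽₄, +)`, on which being
nonzero is additive mod 2, so the weight mod 2 is additive on `Sxi`: a sum of an even- and an
odd-weight word has odd weight. As `ξ₂ ∉ {0, ξ₁}`, every word of `ν + Sxi` has all its `𝔽₄`
coordinates nonzero, hence weight `1{m even} + m`, which is odd; this settles the pairs with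
exactly one word shifted by `ν`, and `(ν + w) + (ν + w') = w + w'` reduces `C, D` to `A, B`.
Disjointness follows since `u + u = 0` has even weight, and the counts since toggling one
coordinate swaps the two halves of `Sxi`, which has `2 ^ m` elements. -/

lemma add4_comm : ∀ a b, add4 a b = add4 b a := by decide

lemma add4_assoc : ∀ a b c, add4 (add4 a b) c = add4 a (add4 b c) := by decide

lemma add4_self : ∀ a, add4 a a = 0 := by decide

lemma add4_zero_left : ∀ a, add4 0 a = a := by decide

section addV

variable {m : ℕ}

lemma addV_comm (u v : ZMod 2 × (Fin m → Fin 4)) : addV u v = addV v u :=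
  Prod.ext (add_comm _ _) (funext fun _ => add4_comm _ _)

lemma addV_assoc (u v w : ZMod 2 × (Fin m → Fin 4)) :
    addV (addV u v) w = addV u (addV v w) :=
  Prod.ext (add_assoc _ _ _) (funext fun _ => add4_assoc _ _ _)

lemma addV_left_comm (u v w : ZMod 2 × (Fin m → Fin 4)) :
    addV u (addV v w) = addV v (addV u w) := by
  rw [← addV_assoc, addV_comm u, addV_assoc]

lemma addV_self (u : ZMod 2 × (Fin m → Fin 4)) : addV u u = (0, fun _ => 0) :=
  Prod.ext (CharTwo.add_self_eq_zero _) (funext fun _ => add4_self _)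

lemma addV_addV_cancel_left (ν w : ZMod 2 × (Fin m → Fin 4)) : addV ν (addV ν w) = w := by
  rw [← addV_assoc, addV_self]
  exact Prod.ext (zero_add _) (funext fun _ => add4_zero_left _)

lemma addV_right_injective (ν : ZMod 2 × (Fin m → Fin 4)) : Function.Injective (addV ν) :=
  Function.LeftInverse.injective (addV_addV_cancel_left ν)

lemma addV_addV_addV_cancel_left (ν v w : ZMod 2 × (Fin m → Fin 4)) :
    addV (addV ν v) (addV ν w) = addV v w := by
  rw [addV_assoc, addV_left_comm v, addV_addV_cancel_left]

lemma wtV_addV_self (u : ZMod 2 × (Fin m → Fin 4)) : wtV (addV u u) = 0 := by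
  simp [addV_self, wtV]

lemma natCast_wtV (u : ZMod 2 × (Fin m → Fin 4)) :
    (wtV u : ZMod 2) = (if u.1 ≠ 0 then 1 else 0) + ∑ k, if u.2 k ≠ 0 then 1 else 0 := by
  simp only [wtV, Finset.card_filter]
  push_cast
  rfl

end addV

section Sxi

variable {m : ℕ} {ξ₁ : Fin 4}

lemma mem_Sxi {u : ZMod 2 × (Fin m → Fin 4)} :
    u ∈ Sxi m ξ₁ ↔ u.1 = 0 ∧ ∀ j, u.2 j = 0 ∨ u.2 j = ξ₁ := by
  simp [Sxi]

lemma addV_mem_Sxi {u v : ZMod 2 × (Fin m → Fin 4)} (hu : u ∈ Sxi m ξ₁) (hv : v ∈ Sxi m ξ₁) :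
    addV u v ∈ Sxi m ξ₁ := by
  have closed : ∀ ξ₁ a b : Fin 4, (a = 0 ∨ a = ξ₁) → (b = 0 ∨ b = ξ₁) →
      add4 a b = 0 ∨ add4 a b = ξ₁ := by decide
  rw [mem_Sxi] at *
  exact ⟨by simp [addV, hu.1, hv.1], fun j => closed ξ₁ _ _ (hu.2 j) (hv.2 j)⟩

lemma natCast_wtV_addV_of_mem_Sxi {u v : ZMod 2 × (Fin m → Fin 4)}
    (hu : u ∈ Sxi m ξ₁) (hv : v ∈ Sxi m ξ₁) :
    (wtV (addV u v) : ZMod 2) = wtV u + wtV v := by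
  have additive : ∀ ξ₁ a b : Fin 4, (a = 0 ∨ a = ξ₁) → (b = 0 ∨ b = ξ₁) →
      (if add4 a b ≠ 0 then (1 : ZMod 2) else 0) =
        (if a ≠ 0 then 1 else 0) + if b ≠ 0 then 1 else 0 := by decide
  rw [mem_Sxi] at hu hv
  simp only [natCast_wtV, addV, hu.1, hv.1, add_zero, ne_eq, not_true_eq_false, if_false,
    zero_add, ← Finset.sum_add_distrib]
  exact Finset.sum_congr rfl fun k _ => additive ξ₁ _ _ (hu.2 k) (hv.2 k)

lemma odd_wtV_addV_of_mem_filter {u v : ZMod 2 × (Fin m → Fin 4)}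
    (hu : u ∈ (Sxi m ξ₁).filter fun u => Even (wtV u))
    (hv : v ∈ (Sxi m ξ₁).filter fun v => Odd (wtV v)) :
    Odd (wtV (addV u v)) := by
  obtain ⟨hu, hu_even⟩ := Finset.mem_filter.1 hu
  obtain ⟨hv, hv_odd⟩ := Finset.mem_filter.1 hv
  rw [← ZMod.natCast_eq_one_iff_odd, natCast_wtV_addV_of_mem_Sxi hu hv,
    ZMod.natCast_eq_zero_iff_even.2 hu_even, ZMod.natCast_eq_one_iff_odd.2 hv_odd, zero_add]

lemma wtV_addV_const_of_mem_Sxi {c : ZMod 2} {ξ₂ : Fin 4} (h₂ : ξ₂ ≠ 0) (h₁₂ : ξ₁ ≠ ξ₂)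
    {w : ZMod 2 × (Fin m → Fin 4)} (hw : w ∈ Sxi m ξ₁) :
    wtV (addV (c, fun _ => ξ₂) w) = wtV (c, fun _ : Fin m => ξ₂) := by
  have never_zero : ∀ ξ₁ ξ₂ a : Fin 4, ξ₂ ≠ 0 → ξ₁ ≠ ξ₂ → (a = 0 ∨ a = ξ₁) → add4 ξ₂ a ≠ 0 := by
    decide
  rw [mem_Sxi] at hw
  simp only [wtV, addV, hw.1, add_zero, h₂, ne_eq, not_false_eq_true,
    fun k => never_zero ξ₁ ξ₂ _ h₂ h₁₂ (hw.2 k)]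

lemma odd_wtV_addV_addV_const_of_mem_Sxi {c : ZMod 2} {ξ₂ : Fin 4} (h₂ : ξ₂ ≠ 0)
    (h₁₂ : ξ₁ ≠ ξ₂) (hc : Odd (wtV (c, fun _ : Fin m => ξ₂))) {u w : ZMod 2 × (Fin m → Fin 4)}
    (hu : u ∈ Sxi m ξ₁) (hw : w ∈ Sxi m ξ₁) :
    Odd (wtV (addV u (addV (c, fun _ => ξ₂) w))) := by
  rwa [addV_left_comm, wtV_addV_const_of_mem_Sxi h₂ h₁₂ (addV_mem_Sxi hu hw)]

lemma card_Sxi (h₁ : ξ₁ ≠ 0) : (Sxi m ξ₁).card = 2 ^ m := by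
  have : Sxi m ξ₁ = (Fintype.piFinset fun _ => {0, ξ₁}).image (Prod.mk 0) := by
    ext u
    simp [mem_Sxi, Prod.ext_iff, eq_comm, and_comm]
  rw [this, Finset.card_image_of_injective _ (Prod.mk_right_injective 0),
    Fintype.card_piFinset_const, Finset.card_pair h₁.symm]

lemma card_filter_even_wtV_Sxi_eq_odd (i : Fin m) (h₁ : ξ₁ ≠ 0) :
    ((Sxi m ξ₁).filter fun u => Even (wtV u)).card =
      ((Sxi m ξ₁).filter fun u => Odd (wtV u)).card := by
  set e : ZMod 2 × (Fin m → Fin 4) := (0, Pi.single i ξ₁)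
  have he : e ∈ Sxi m ξ₁ := mem_Sxi.2 ⟨rfl, fun j => by
    rcases eq_or_ne j i with rfl | hj <;> simp [e, *]⟩
  have hwe : wtV e = 1 := by
    simp [wtV, e, Pi.single_apply, h₁, Finset.filter_eq']
  have toggle : ∀ u ∈ Sxi m ξ₁, (Even (wtV (addV e u)) ↔ ¬ Even (wtV u)) := by
    intro u hu
    rw [← ZMod.natCast_eq_zero_iff_even, ← ZMod.natCast_eq_zero_iff_even,
      natCast_wtV_addV_of_mem_Sxi he hu, hwe]
    generalize (wtV u : ZMod 2) = a
    revert a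
    decide
  refine Finset.card_nbij' (addV e) (addV e) ?_ ?_ ?_ ?_
  all_goals intro u hu
  all_goals simp only [Finset.coe_filter, Set.mem_ofPred_eq] at hu
  · exact Finset.mem_filter.2
      ⟨addV_mem_Sxi he hu.1, Nat.not_even_iff_odd.1 ((toggle u hu.1).not_left.2 hu.2)⟩
  · exact Finset.mem_filter.2
      ⟨addV_mem_Sxi he hu.1, (toggle u hu.1).2 (Nat.not_even_iff_odd.2 hu.2)⟩
  · exact addV_addV_cancel_left e u
  · exact addV_addV_cancel_left e u

lemma card_filter_odd_wtV_Sxi (hm : 1 ≤ m) (h₁ : ξ₁ ≠ 0) :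
    ((Sxi m ξ₁).filter fun u => Odd (wtV u)).card = 2 ^ (m - 1) := by
  have halves := Finset.card_filter_add_card_filter_not (s := Sxi m ξ₁) fun u => Even (wtV u)
  simp only [Nat.not_even_iff_odd, card_Sxi h₁,
    card_filter_even_wtV_Sxi_eq_odd ⟨0, hm⟩ h₁] at halves
  have : 2 ^ m = 2 ^ (m - 1) * 2 := by rw [← pow_succ, Nat.sub_add_cancel hm]
  omega

lemma card_filter_even_wtV_Sxi (hm : 1 ≤ m) (h₁ : ξ₁ ≠ 0) :
    ((Sxi m ξ₁).filter fun u => Even (wtV u)).card = 2 ^ (m - 1) := by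
  rw [card_filter_even_wtV_Sxi_eq_odd ⟨0, hm⟩ h₁, card_filter_odd_wtV_Sxi hm h₁]

end Sxi

theorem rate54_four_group (m : ℕ) (hm : 1 ≤ m)
    (ξ₁ ξ₂ : Fin 4) (h₁ : ξ₁ ≠ 0) (h₂ : ξ₂ ≠ 0) (h₁₂ : ξ₁ ≠ ξ₂) :
    let SA := (Sxi m ξ₁).filter fun u => Even (wtV u)
    let SB := (Sxi m ξ₁).filter fun u => Odd (wtV u)
    let ν : ZMod 2 × (Fin m → Fin 4) :=
      ((if Even m then 1 else 0), fun _ => ξ₂)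
    let SC := SA.image (addV ν)
    let SD := SB.image (addV ν)
    let T : Fin 4 → Finset (ZMod 2 × (Fin m → Fin 4)) := ![SA, SB, SC, SD]
    (∀ i j, i ≠ j → Disjoint (T i) (T j)) ∧
    (∀ i, (T i).card = 2 ^ (m - 1)) ∧
    (∀ i j, i ≠ j → ∀ u ∈ T i, ∀ v ∈ T j, Odd (wtV (addV u v))) := by
  intro SA SB ν SC SD T
  have hν : Odd (wtV ν) := by
    rcases Nat.even_or_odd m with hm | hm <;> simp [ν, wtV, hm, h₂]
  have odd_shift {u w} (hu : u ∈ Sxi m ξ₁) (hw : w ∈ Sxi m ξ₁) :=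
    odd_wtV_addV_addV_const_of_mem_Sxi h₂ h₁₂ hν hu hw
  have hodd : ∀ i j, i ≠ j → ∀ u ∈ T i, ∀ v ∈ T j, Odd (wtV (addV u v)) := by
    intro i j hij u hu v hv
    wlog hlt : i < j generalizing i j u v
    · rw [addV_comm]
      exact this j i hij.symm v hv u hu (lt_of_le_of_ne (not_lt.1 hlt) hij.symm)
    fin_cases i <;> fin_cases j <;> try exact absurd hlt (by decide)
    · exact odd_wtV_addV_of_mem_filter hu hv
    pick_goal 5 -- the pair (SC, SD); the remaining four pair S with ν + S
    · obtain ⟨w, hw, rfl⟩ := Finset.mem_image.1 hu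
      obtain ⟨w', hw', rfl⟩ := Finset.mem_image.1 hv
      rw [addV_addV_addV_cancel_left]
      exact odd_wtV_addV_of_mem_filter hw hw'
    all_goals
      obtain ⟨w, hw, rfl⟩ := Finset.mem_image.1 hv
      exact odd_shift (Finset.mem_filter.1 hu).1 (Finset.mem_filter.1 hw).1
  refine ⟨fun i j hij => Finset.disjoint_left.2 fun u hi hj => ?_, fun i => ?_, hodd⟩
  · simpa [wtV_addV_self] using hodd i j hij u hi u hj
  · have hA := card_filter_even_wtV_Sxi hm h₁
    have hB := card_filter_odd_wtV_Sxi hm h₁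
    fin_cases i
    exacts [hA, hB, (Finset.card_image_of_injective _ (addV_right_injective ν)).trans hA,
      (Finset.card_image_of_injective _ (addV_right_injective ν)).trans hB]
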